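/- Let P = P₀⋯P_ℓ be a composition of commuting endomorphisms. Then P admits a decomposition (i.e. an α-decomposition with α = {J ⊆ L : |J| = 1}) if and only if every pair P_i, P_j with i ≠ j is relatively invertible, i.e. there exist Q_{i,j} ∈ End(V) commuting with all P_k such that id_V = Q_{i,j} P_i + Q_{j,i} P_j for all i ≠ j. -/

import Mathlib

/-!
Forward: in `1 = Σ_k Q_k P^k` every `P^k` with `k ≠ i` contains the factor `P_i`, and `P^i` contains
`P_j`, so `1` is a combination of `P_i` and `P_j`.

Backward: induction on the index set. Given `1 = Σ_{i ∈ s} R_i P^{s∖i}` and a new index `a`,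
insert `1 = Q_{i,a} P_i + Q_{a,i} P_a` into the `i`-th term: `P_i P^{s∖i} = ∏_s P` is the
`a`-th product for `s ∪ {a}`, and `P_a P^{s∖i}` is its `i`-th product.
-/

open Finset

/-- The product `∏_{j ∈ s} P j` of a family of pairwise commuting endomorphisms. -/
def prodOver {R : Type*} [Monoid R] {n : ℕ} (P : Fin n → R)
    (hP : ∀ i j, Commute (P i) (P j)) (s : Finset (Fin n)) : R :=
  s.noncommProd P fun a _ b _ _ => hP a b

section Monoid

variable {R : Type*} [Monoid R] {n : ℕ} (P : Fin n → R) (hP : ∀ i j, Commute (P i) (P j))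

lemma commute_prodOver (s : Finset (Fin n)) {x : R} (hx : ∀ k, Commute x (P k)) :
    Commute x (prodOver P hP s) :=
  noncommProd_commute _ _ _ _ fun k _ => hx k

lemma prodOver_erase_mul {s : Finset (Fin n)} {i : Fin n} (hi : i ∈ s) :
    prodOver P hP (s.erase i) * P i = prodOver P hP s :=
  noncommProd_erase_mul s hi P _

lemma mul_prodOver_erase {s : Finset (Fin n)} {i : Fin n} (hi : i ∈ s) :
    P i * prodOver P hP (s.erase i) = prodOver P hP s :=
  mul_noncommProd_erase s hi P _

lemma prodOver_insert {s : Finset (Fin n)} {a : Fin n} (ha : a ∉ s) :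
    prodOver P hP (insert a s) = P a * prodOver P hP s :=
  noncommProd_insert_of_notMem s a P _ ha

end Monoid

section Semiring

variable {R : Type*} [Semiring R] {n : ℕ} (P : Fin n → R) (hP : ∀ i j, Commute (P i) (P j))

def HasDecomposition (s : Finset (Fin n)) : Prop :=
  ∃ Q : Fin n → R, (∀ i ∈ s, ∀ k, Commute (Q i) (P k)) ∧
    ∑ i ∈ s, Q i * prodOver P hP (s.erase i) = 1

def PairwiseRelativelyInvertible (s : Finset (Fin n)) : Prop :=
  ∃ Q : Fin n → Fin n → R, ∀ i ∈ s, ∀ j ∈ s, i ≠ j →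
    (∀ k, Commute (Q i j) (P k)) ∧ Q i j * P i + Q j i * P j = 1

lemma sum_mul_prodOver_erase_eq (Q : Fin n → R) {s : Finset (Fin n)} {i j : Fin n}
    (hi : i ∈ s) (hj : j ∈ s) (hij : i ≠ j) :
    ∑ k ∈ s, Q k * prodOver P hP (s.erase k) =
      (∑ k ∈ s.erase i, Q k * prodOver P hP ((s.erase k).erase i)) * P i +
        Q i * prodOver P hP ((s.erase i).erase j) * P j := by
  rw [← sum_erase_add _ _ hi, sum_mul, mul_assoc (Q i),
    prodOver_erase_mul P hP (mem_erase.2 ⟨hij.symm, hj⟩)]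
  congr 1
  refine sum_congr rfl fun k hk => ?_
  rw [mul_assoc, prodOver_erase_mul P hP (mem_erase.2 ⟨(ne_of_mem_erase hk).symm, hi⟩)]

theorem HasDecomposition.pairwiseRelativelyInvertible {s : Finset (Fin n)}
    (h : HasDecomposition P hP s) : PairwiseRelativelyInvertible P s := by
  obtain ⟨Q, hQ, hsum⟩ := h
  -- `A i`, `B j i` are the coefficients of `P i`, `P j` in `sum_mul_prodOver_erase_eq`; `i < j` picks `i`
  let A i := ∑ k ∈ s.erase i, Q k * prodOver P hP ((s.erase k).erase i)
  let B i j := Q j * prodOver P hP ((s.erase j).erase i)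
  have hA : ∀ i k, Commute (A i) (P k) := fun i k =>
    Commute.sum_left _ _ _ fun m hm =>
      (hQ m (mem_of_mem_erase hm) k).mul_left (commute_prodOver P hP _ (hP k)).symm
  have hB : ∀ i j, j ∈ s → ∀ k, Commute (B i j) (P k) := fun i j hj k =>
    (hQ j hj k).mul_left (commute_prodOver P hP _ (hP k)).symm
  refine ⟨fun i j => if i < j then A i else B i j, fun i hi j hj hij => ⟨?_, ?_⟩⟩
  · intro k
    dsimp only
    split
    exacts [hA i k, hB i j hj k]
  · rcases hij.lt_or_gt with h | h
    · simp only [if_pos h, if_neg h.not_gt]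
      rw [← sum_mul_prodOver_erase_eq P hP Q hi hj hij, hsum]
    · simp only [if_neg h.not_gt, if_pos h]
      rw [add_comm, ← sum_mul_prodOver_erase_eq P hP Q hj hi hij.symm, hsum]

lemma PairwiseRelativelyInvertible.mono {s t : Finset (Fin n)} (hst : s ⊆ t)
    (h : PairwiseRelativelyInvertible P t) : PairwiseRelativelyInvertible P s :=
  let ⟨Q, hQ⟩ := h
  ⟨Q, fun i hi j hj => hQ i (hst hi) j (hst hj)⟩

lemma hasDecomposition_singleton (a : Fin n) : HasDecomposition P hP {a} :=
  ⟨fun _ => 1, fun _ _ _ => Commute.one_left _, by simp [prodOver]⟩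

lemma mul_prodOver_add_mul_prodOver_insert_erase {s : Finset (Fin n)} {a i : Fin n}
    (ha : a ∉ s) (hi : i ∈ s) {x y : R} (hxy : x * P i + y * P a = 1) :
    x * prodOver P hP s + y * prodOver P hP ((insert a s).erase i) =
      prodOver P hP (s.erase i) := by
  have hai : a ≠ i := fun h => ha (h ▸ hi)
  rw [erase_insert_of_ne hai, prodOver_insert P hP fun h => ha (mem_of_mem_erase h),
    ← mul_prodOver_erase P hP hi, ← mul_assoc, ← mul_assoc, ← add_mul, hxy, one_mul]

lemma HasDecomposition.insert {s : Finset (Fin n)} {a : Fin n} (ha : a ∉ s)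
    (hs : HasDecomposition P hP s) (h : PairwiseRelativelyInvertible P (insert a s)) :
    HasDecomposition P hP (insert a s) := by
  obtain ⟨D, hD, hsum⟩ := hs
  obtain ⟨Q, hQ⟩ := h
  have hQ' : ∀ i ∈ s, (∀ k, Commute (Q i a) (P k)) ∧ (∀ k, Commute (Q a i) (P k)) ∧
      Q i a * P i + Q a i * P a = 1 := fun i hi =>
    have hia : i ≠ a := fun h => ha (h ▸ hi)
    ⟨(hQ i (mem_insert_of_mem hi) a (mem_insert_self a s) hia).1,
      (hQ a (mem_insert_self a s) i (mem_insert_of_mem hi) hia.symm).1,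
      (hQ i (mem_insert_of_mem hi) a (mem_insert_self a s) hia).2⟩
  refine ⟨fun i => if i = a then ∑ j ∈ s, D j * Q j a else D i * Q a i, ?_, ?_⟩
  · intro i hi k
    by_cases hia : i = a
    · simp only [if_pos hia]
      exact Commute.sum_left _ _ _ fun j hj => (hD j hj k).mul_left ((hQ' j hj).1 k)
    · have hi : i ∈ s := (mem_insert.1 hi).resolve_left hia
      simp only [if_neg hia]
      exact (hD i hi k).mul_left ((hQ' i hi).2.1 k)
  · dsimp only
    rw [sum_insert ha, erase_insert ha, if_pos rfl, sum_mul, ← hsum, ← sum_add_distrib]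
    refine sum_congr rfl fun i hi => ?_
    have hia : i ≠ a := fun h => ha (h ▸ hi)
    rw [if_neg hia, mul_assoc, mul_assoc, ← mul_add,
      mul_prodOver_add_mul_prodOver_insert_erase P hP ha hi (hQ' i hi).2.2]

theorem PairwiseRelativelyInvertible.hasDecomposition {s : Finset (Fin n)} (hs : s.Nonempty)
    (h : PairwiseRelativelyInvertible P s) : HasDecomposition P hP s := by
  induction hs using Nonempty.cons_induction with
  | singleton a => exact hasDecomposition_singleton P hP a
  | cons a s ha _ ih =>
    rw [cons_eq_insert] at h ⊢
    exact (ih (h.mono P (subset_insert a s))).insert P hP ha h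

theorem hasDecomposition_iff_pairwiseRelativelyInvertible {s : Finset (Fin n)}
    (hs : s.Nonempty) : HasDecomposition P hP s ↔ PairwiseRelativelyInvertible P s :=
  ⟨HasDecomposition.pairwiseRelativelyInvertible P hP,
    PairwiseRelativelyInvertible.hasDecomposition P hP hs⟩

end Semiring

/-- `P = P₀⋯P_ℓ` admits a decomposition
(`id_V = Σ_i Q_i P^i` with `Q_i` commuting with all `P_j`, `P^i = ∏_{j≠i} P_j`)
iff every pair `P_i, P_j`, `i ≠ j`, is relatively invertible: there are
`Q_{i,j}` commuting with all `P_k` with `id_V = Q_{i,j}P_i + Q_{j,i}P_j`. -/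
theorem statement13 {F V : Type*} [Field F] [AddCommGroup V] [Module F V]
    (ℓ : ℕ) (P : Fin (ℓ + 1) → Module.End F V)
    (hP : ∀ i j, Commute (P i) (P j)) :
    (∃ Q : Fin (ℓ + 1) → Module.End F V,
      (∀ i j, Commute (Q i) (P j)) ∧
      ∑ i : Fin (ℓ + 1), Q i * prodOver P hP (Finset.univ.erase i) = 1) ↔
    (∃ Q : Fin (ℓ + 1) → Fin (ℓ + 1) → Module.End F V,
      ∀ i j, i ≠ j →
        (∀ k, Commute (Q i j) (P k)) ∧
        Q i j * P i + Q j i * P j = 1) := by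
  simpa only [HasDecomposition, PairwiseRelativelyInvertible, mem_univ, forall_const] using
    hasDecomposition_iff_pairwiseRelativelyInvertible P hP univ_nonempty
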